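/- arXiv:1301.7619 — 3 statements merged into one kernel-verified Lean document; each statement's English description precedes it below -/
import Mathlib

section
/- For any real matrix X of rank r with singular value decomposition X = U Σ Vᵀ, the nuclear norm satisfies ‖X‖_* = min over all factorizations X = B Cᵀ of (1/2)(‖B‖_F² + ‖C‖_F²), and the minimum is attained at B = U Σ^{1/2}, C = V Σ^{1/2}. -/
/-!
With `P = Uᵀ B` and `Q = Vᵀ C`, any factorization `X = B Cᵀ` gives
`∑ σᵢ = tr (Uᵀ X V) = ⟨P, Q⟩ ≤ ½ (‖P‖_F² + ‖Q‖_F²) ≤ ½ (‖B‖_F² + ‖C‖_F²)`,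
the last step because multiplying by `Uᵀ` with `Uᵀ U = 1` is a contraction in the Frobenius
norm. The balanced factorization `B = U Σ^{1/2}`, `C = V Σ^{1/2}` has energy exactly `∑ σᵢ`,
since the columns of `U` and `V` are unit vectors.
-/

open Matrix

namespace Matrix

variable {m n k : Type*}

theorem sum_sum_sq_eq_trace_transpose_mul [Fintype m] [Fintype n] (B : Matrix m n ℝ) :
    ∑ i, ∑ j, B i j ^ 2 = trace (Bᵀ * B) := by
  simp only [trace, diag, mul_apply, transpose_apply, sq]
  rw [Finset.sum_comm]

theorem trace_mul_transpose_eq_sum_sum [Fintype m] [Fintype n] (P Q : Matrix m n ℝ) :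
    trace (P * Qᵀ) = ∑ i, ∑ j, P i j * Q i j := by
  simp only [trace, diag, mul_apply, transpose_apply]

theorem sum_sum_mul_le_half_sum_sum_sq_add [Fintype m] [Fintype n] (P Q : Matrix m n ℝ) :
    ∑ i, ∑ j, P i j * Q i j ≤ 1 / 2 * (∑ i, ∑ j, P i j ^ 2 + ∑ i, ∑ j, Q i j ^ 2) := by
  have h : 0 ≤ ∑ i, ∑ j, (P i j - Q i j) ^ 2 := by positivity
  simp only [sub_sq, Finset.sum_add_distrib, Finset.sum_sub_distrib, mul_assoc,
    ← Finset.mul_sum] at h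
  linarith

theorem sum_sum_sq_transpose_mul_le [Fintype m] [Fintype n] [Fintype k] [DecidableEq k]
    {U : Matrix n k ℝ} (hU : Uᵀ * U = 1) (B : Matrix n m ℝ) :
    ∑ i, ∑ j, (Uᵀ * B) i j ^ 2 ≤ ∑ i, ∑ j, B i j ^ 2 := by
  set P := Uᵀ * B
  have pythagoras : (B - U * P)ᵀ * (B - U * P) = Bᵀ * B - Pᵀ * P := by
    have hUUP : Uᵀ * (U * P) = P := by rw [← Matrix.mul_assoc, hU, Matrix.one_mul]
    simp only [transpose_sub, transpose_mul, Matrix.sub_mul,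
      Matrix.mul_sub, Matrix.mul_assoc, hUUP]
    simp only [← Matrix.mul_assoc Bᵀ U, P, transpose_mul, transpose_transpose]
    abel
  have h : 0 ≤ trace ((B - U * P)ᵀ * (B - U * P)) := by
    rw [← sum_sum_sq_eq_trace_transpose_mul]
    positivity
  rw [pythagoras, trace_sub] at h
  rw [sum_sum_sq_eq_trace_transpose_mul, sum_sum_sq_eq_trace_transpose_mul]
  linarith

theorem sum_sq_apply_eq_one_of_transpose_mul_self [Fintype n] [DecidableEq k] {U : Matrix n k ℝ}
    (hU : Uᵀ * U = 1) (j : k) : ∑ i, U i j ^ 2 = 1 := by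
  simpa [mul_apply, sq] using congrFun (congrFun hU j) j

theorem sum_sum_sq_mul_diagonal [Fintype n] [Fintype k] [DecidableEq k] {U : Matrix n k ℝ}
    (hU : Uᵀ * U = 1) (d : k → ℝ) :
    ∑ i, ∑ j, (U * diagonal d) i j ^ 2 = ∑ j, d j ^ 2 := by
  rw [Finset.sum_comm]
  refine Finset.sum_congr rfl fun j _ => ?_
  simp only [mul_diagonal, mul_pow, ← Finset.sum_mul,
    sum_sq_apply_eq_one_of_transpose_mul_self hU j, one_mul]

theorem sum_le_half_sum_sum_sq_add_of_mul_transpose_eq [Fintype m] [Fintype n] [Fintype k]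
    [DecidableEq k] {U : Matrix n k ℝ} {V : Matrix m k ℝ} (hU : Uᵀ * U = 1) (hV : Vᵀ * V = 1)
    (σ : k → ℝ) {ι : Type*} [Fintype ι] {B : Matrix n ι ℝ} {C : Matrix m ι ℝ}
    (hBC : U * diagonal σ * Vᵀ = B * Cᵀ) :
    ∑ i, σ i ≤ 1 / 2 * (∑ i, ∑ j, B i j ^ 2 + ∑ i, ∑ j, C i j ^ 2) := by
  have trace_eq : ∑ i, σ i = trace ((Uᵀ * B) * (Vᵀ * C)ᵀ) := by
    have h := congrArg (fun Y => Uᵀ * Y * V) hBC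
    simp only [Matrix.mul_assoc, hV, Matrix.mul_one] at h
    rw [← Matrix.mul_assoc Uᵀ U, hU, Matrix.one_mul] at h
    rw [← trace_diagonal, h, transpose_mul, transpose_transpose]
    simp only [Matrix.mul_assoc]
  calc ∑ i, σ i = ∑ i, ∑ j, (Uᵀ * B) i j * (Vᵀ * C) i j := by
        rw [trace_eq, trace_mul_transpose_eq_sum_sum]
    _ ≤ 1 / 2 * (∑ i, ∑ j, (Uᵀ * B) i j ^ 2 + ∑ i, ∑ j, (Vᵀ * C) i j ^ 2) :=
        sum_sum_mul_le_half_sum_sum_sq_add _ _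
    _ ≤ 1 / 2 * (∑ i, ∑ j, B i j ^ 2 + ∑ i, ∑ j, C i j ^ 2) := by
        gcongr
        · exact sum_sum_sq_transpose_mul_le hU B
        · exact sum_sum_sq_transpose_mul_le hV C

end Matrix

/-- Nuclear norm as minimal factorization energy: if `X = U Σ Vᵀ` is an SVD of
`X` (with `U, V` having orthonormal columns and `Σ = diagonal σ`, `σ ≥ 0`),
then the nuclear norm `∑ σ_i` is the least value of `(1/2)(‖B‖_F² + ‖C‖_F²)`
over all factorizations `X = B Cᵀ`, and the minimum is attained at
`B = U Σ^{1/2}`, `C = V Σ^{1/2}`. -/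
theorem nuclear_norm_min_factorization (N M k : ℕ)
    (X : Matrix (Fin N) (Fin M) ℝ)
    (U : Matrix (Fin N) (Fin k) ℝ) (V : Matrix (Fin M) (Fin k) ℝ)
    (σ : Fin k → ℝ) (hσ : ∀ i, 0 ≤ σ i)
    (hU : Uᵀ * U = 1) (hV : Vᵀ * V = 1)
    (hX : X = U * Matrix.diagonal σ * Vᵀ) :
    IsLeast
      {v : ℝ | ∃ (k' : ℕ) (B : Matrix (Fin N) (Fin k') ℝ)
          (C : Matrix (Fin M) (Fin k') ℝ), X = B * Cᵀ ∧
          v = (1 / 2) * ((∑ i, ∑ j, B i j ^ 2) + (∑ i, ∑ j, C i j ^ 2))}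
      (∑ i, σ i) ∧
    (X = (U * Matrix.diagonal fun i => Real.sqrt (σ i)) *
          (V * Matrix.diagonal fun i => Real.sqrt (σ i))ᵀ ∧
      (1 / 2) * ((∑ i, ∑ j, (U * Matrix.diagonal fun i => Real.sqrt (σ i)) i j ^ 2) +
          (∑ i, ∑ j, (V * Matrix.diagonal fun i => Real.sqrt (σ i)) i j ^ 2))
        = ∑ i, σ i) := by
  set D : Matrix (Fin k) (Fin k) ℝ := diagonal fun i => √(σ i)
  have balanced : X = (U * D) * (V * D)ᵀ := by
    have hDD : D * D = diagonal σ := by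
      simp [D, diagonal_mul_diagonal, Real.mul_self_sqrt (hσ _)]
    rw [hX, transpose_mul, show Dᵀ = D from diagonal_transpose _, ← hDD]
    simp only [Matrix.mul_assoc]
  have energy :
      1 / 2 * (∑ i, ∑ j, (U * D) i j ^ 2 + ∑ i, ∑ j, (V * D) i j ^ 2) = ∑ i, σ i := by
    simp only [D, sum_sum_sq_mul_diagonal hU, sum_sum_sq_mul_diagonal hV, Real.sq_sqrt (hσ _)]
    ring
  refine ⟨⟨⟨k, U * D, V * D, balanced, energy.symm⟩, ?_⟩, balanced, energy⟩
  rintro v ⟨k', B, C, hBC, rfl⟩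
  exact sum_le_half_sum_sum_sq_add_of_mul_transpose_eq hU hV σ (hX ▸ hBC)
end

section
/- Let f(A) = (1/2)‖(Z − A Πᵀ) ⊙ Δ‖_F² + (μ/2)·trace(Aᵀ R⁻¹ A) where R is symmetric positive definite with largest eigenvalue of R⁻¹ equal to λ, and let g(A, Ā) = (1/2)‖(Z − A Πᵀ) ⊙ Δ‖_F² + μ·((λ/2)·trace(Aᵀ A) − trace(Θᵀ A) + (1/2)·trace(Θᵀ Ā)) with Θ = (λ I − R⁻¹) Ā. Then: (i) f(Ā) = g(Ā, Ā); (ii) the gradients of f and g(·, Ā) coincide at A = Ā; (iii) f(A) ≤ g(A, Ā) for all A. -/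
/-!
Writing `B = λ I - R⁻¹`, completing the square gives
`g(A) = f(A) + (μ/2) tr((A - Ā)ᵀ B (A - Ā))`. Since `λ` is the largest eigenvalue of `R⁻¹`,
`B` is positive semidefinite, so the gap is nonnegative and vanishes at `Ā`. It therefore has a
minimum at `Ā`, where its derivative is zero.
-/

open Matrix

attribute [local instance] Matrix.normedAddCommGroup Matrix.normedSpace

open scoped MatrixOrder ComplexOrder in
theorem Matrix.IsHermitian.posSemidef_smul_one_sub {n 𝕜 : Type*} [Fintype n] [DecidableEq n]
    [RCLike 𝕜] {A : Matrix n n 𝕜} (hA : A.IsHermitian) {lam : ℝ}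
    (hlam : ∀ i, hA.eigenvalues i ≤ lam) : (lam • (1 : Matrix n n 𝕜) - A).PosSemidef := by
  rw [← nonneg_iff_posSemidef, sub_nonneg, ← Algebra.algebraMap_eq_smul_one]
  refine (le_algebraMap_iff_spectrum_le (R := ℝ) hA.isSelfAdjoint).2 ?_
  rw [hA.spectrum_real_eq_range_eigenvalues]
  rintro _ ⟨i, rfl⟩
  exact hlam i

theorem Matrix.PosSemidef.trace_transpose_mul_mul_self_nonneg {m r : Type*} [Fintype m]
    [Fintype r] {B : Matrix m m ℝ} (hB : B.PosSemidef) (X : Matrix m r ℝ) :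
    0 ≤ (Xᵀ * B * X).trace := by
  simpa [conjTranspose_eq_transpose_of_trivial] using
    (hB.conjTranspose_mul_mul_same X).trace_nonneg

section TraceIdentities

variable {m r : Type*} [Fintype m] [Fintype r]

theorem trace_transpose_sub_mul_mul_sub {B : Matrix m m ℝ} (hB : Bᵀ = B) (A Abar : Matrix m r ℝ) :
    ((A - Abar)ᵀ * B * (A - Abar)).trace
      = (Aᵀ * B * A).trace - 2 * ((B * Abar)ᵀ * A).trace + ((B * Abar)ᵀ * Abar).trace := by
  have hcross : (Aᵀ * B * Abar).trace = ((B * Abar)ᵀ * A).trace := by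
    rw [← trace_transpose]
    simp only [transpose_mul, transpose_transpose, hB, Matrix.mul_assoc]
  simp only [transpose_sub, Matrix.sub_mul, Matrix.mul_sub, trace_sub, hcross]
  simp only [transpose_mul, hB, Matrix.mul_assoc]
  ring

theorem surrogate_eq_add_gap [DecidableEq m] {S : Matrix m m ℝ} (hS : Sᵀ = S) (lam : ℝ)
    (A Abar : Matrix m r ℝ) :
    (lam / 2) * (Aᵀ * A).trace - (((lam • (1 : Matrix m m ℝ) - S) * Abar)ᵀ * A).trace
        + (1 / 2) * (((lam • (1 : Matrix m m ℝ) - S) * Abar)ᵀ * Abar).trace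
      = (1 / 2) * (Aᵀ * S * A).trace
        + (1 / 2) * ((A - Abar)ᵀ * (lam • (1 : Matrix m m ℝ) - S) * (A - Abar)).trace := by
  have hB : (lam • (1 : Matrix m m ℝ) - S)ᵀ = lam • 1 - S := by
    rw [transpose_sub, transpose_smul, transpose_one, hS]
  have hquad : (Aᵀ * (lam • (1 : Matrix m m ℝ) - S) * A).trace
      = lam * (Aᵀ * A).trace - (Aᵀ * S * A).trace := by
    simp only [Matrix.mul_sub, Matrix.sub_mul, Matrix.mul_smul, Matrix.smul_mul, Matrix.mul_one,
      trace_sub, trace_smul, smul_eq_mul]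
  rw [trace_transpose_sub_mul_mul_sub hB, hquad]
  ring

theorem differentiable_trace_transpose_sub_mul_mul_sub (B : Matrix m m ℝ) (Abar : Matrix m r ℝ) :
    Differentiable ℝ fun A : Matrix m r ℝ => ((A - Abar)ᵀ * B * (A - Abar)).trace := by
  simp only [trace, diag, mul_apply, transpose_apply, Matrix.sub_apply]
  fun_prop

end TraceIdentities

/-- The gap `g - f` attains its minimum at `x`, so its derivative vanishes there. -/
theorem fderiv_eq_of_le_of_eq {E : Type*} [NormedAddCommGroup E] [NormedSpace ℝ E]
    {f g : E → ℝ} {x : E} (hle : ∀ y, f y ≤ g y) (heq : f x = g x)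
    (hgap : DifferentiableAt ℝ (g - f) x) : fderiv ℝ f x = fderiv ℝ g x := by
  have hmin : IsLocalMin (g - f) x :=
    Filter.Eventually.of_forall fun y => by simpa [heq] using hle y
  have hgap' : HasFDerivAt (g - f) (0 : E →L[ℝ] ℝ) x :=
    hmin.fderiv_eq_zero ▸ hgap.hasFDerivAt
  have hg : g = f + (g - f) := by abel
  by_cases hf : DifferentiableAt ℝ f x
  · rw [hg, (hf.hasFDerivAt.add hgap').fderiv, add_zero]
  · have hg' : ¬ DifferentiableAt ℝ g x := fun hgd => hf (by simpa using hgd.sub hgap)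
    rw [fderiv_zero_of_not_differentiableAt hf, fderiv_zero_of_not_differentiableAt hg']

theorem bsum_majorization_gaussian_general (M K R : ℕ) (μ lam : ℝ) (hμ : 0 < μ)
    (Z Δ : Matrix (Fin M) (Fin K) ℝ) (Pmat : Matrix (Fin K) (Fin R) ℝ)
    (Rm : Matrix (Fin M) (Fin M) ℝ)
    (hH : (Rm⁻¹).IsHermitian)
    (hlam : IsGreatest (Set.range hH.eigenvalues) lam)
    (Abar : Matrix (Fin M) (Fin R) ℝ)
    (f g : Matrix (Fin M) (Fin R) ℝ → ℝ)
    (hf : ∀ A, f A = (1 / 2) * (∑ i, ∑ j, ((Z i j - (A * Pmatᵀ) i j) * Δ i j) ^ 2)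
        + (μ / 2) * (Aᵀ * Rm⁻¹ * A).trace)
    (hg : ∀ A, g A = (1 / 2) * (∑ i, ∑ j, ((Z i j - (A * Pmatᵀ) i j) * Δ i j) ^ 2)
        + μ * ((lam / 2) * (Aᵀ * A).trace
            - (((lam • (1 : Matrix (Fin M) (Fin M) ℝ) - Rm⁻¹) * Abar)ᵀ * A).trace
            + (1 / 2) * (((lam • (1 : Matrix (Fin M) (Fin M) ℝ) - Rm⁻¹) * Abar)ᵀ * Abar).trace)) :
    f Abar = g Abar ∧
    fderiv ℝ f Abar = fderiv ℝ g Abar ∧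
    ∀ A, f A ≤ g A := by
  have hB : (lam • (1 : Matrix (Fin M) (Fin M) ℝ) - Rm⁻¹).PosSemidef :=
    hH.posSemidef_smul_one_sub fun i => hlam.2 ⟨i, rfl⟩
  have hgap : ∀ A, g A = f A + (μ / 2) *
      ((A - Abar)ᵀ * (lam • (1 : Matrix (Fin M) (Fin M) ℝ) - Rm⁻¹) * (A - Abar)).trace := by
    intro A
    rw [hf, hg]
    linear_combination μ * surrogate_eq_add_gap (S := Rm⁻¹) hH lam A Abar
  have hle : ∀ A, f A ≤ g A := fun A => by
    have := hB.trace_transpose_mul_mul_self_nonneg (A - Abar)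
    rw [hgap]
    exact le_add_of_nonneg_right (by positivity)
  have heq : f Abar = g Abar := by simp [hgap]
  refine ⟨heq, fderiv_eq_of_le_of_eq hle heq ?_, hle⟩
  rw [show g - f = _ from funext fun A => sub_eq_iff_eq_add'.2 (hgap A)]
  exact ((differentiable_trace_transpose_sub_mul_mul_sub _ Abar).const_mul _).differentiableAt

/-- BSUM majorization for the Gaussian case: with
`f(A) = (1/2)‖(Z − AΠᵀ) ⊙ Δ‖_F² + (μ/2) tr(Aᵀ R⁻¹ A)` and
`g(A, Ā) = (1/2)‖(Z − AΠᵀ) ⊙ Δ‖_F² + μ((λ/2) tr(AᵀA) − tr(ΘᵀA) + (1/2) tr(ΘᵀĀ))`,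
where `Θ = (λI − R⁻¹)Ā` and `λ` is the largest eigenvalue of `R⁻¹`, one has
(i) `f(Ā) = g(Ā, Ā)`; (ii) the derivatives of `f` and `g(·, Ā)` coincide at `Ā`;
(iii) `f(A) ≤ g(A, Ā)` for all `A`. -/
theorem bsum_majorization_gaussian (M K R : ℕ) (μ lam : ℝ) (hμ : 0 < μ)
    (Z Δ : Matrix (Fin M) (Fin K) ℝ) (Pmat : Matrix (Fin K) (Fin R) ℝ)
    (Rm : Matrix (Fin M) (Fin M) ℝ) (hRm : Rm.PosDef)
    (hH : (Rm⁻¹).IsHermitian)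
    (hlam : IsGreatest (Set.range hH.eigenvalues) lam)
    (Abar : Matrix (Fin M) (Fin R) ℝ)
    (f g : Matrix (Fin M) (Fin R) ℝ → ℝ)
    (hf : ∀ A, f A = (1 / 2) * (∑ i, ∑ j, ((Z i j - (A * Pmatᵀ) i j) * Δ i j) ^ 2)
        + (μ / 2) * (Aᵀ * Rm⁻¹ * A).trace)
    (hg : ∀ A, g A = (1 / 2) * (∑ i, ∑ j, ((Z i j - (A * Pmatᵀ) i j) * Δ i j) ^ 2)
        + μ * ((lam / 2) * (Aᵀ * A).trace
            - (((lam • (1 : Matrix (Fin M) (Fin M) ℝ) - Rm⁻¹) * Abar)ᵀ * A).trace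
            + (1 / 2) * (((lam • (1 : Matrix (Fin M) (Fin M) ℝ) - Rm⁻¹) * Abar)ᵀ * Abar).trace)) :
    f Abar = g Abar ∧
    fderiv ℝ f Abar = fderiv ℝ g Abar ∧
    ∀ A, f A ≤ g A :=
  bsum_majorization_gaussian_general M K R μ lam hμ Z Δ Pmat Rm hH hlam Abar f g hf hg
end

section
/- The rank-regularized tensor completion problem min (1/2)‖(Z − X) ⊙ Δ‖_F² + (μ/2)(‖A‖_F² + ‖B‖_F² + ‖C‖_F²) subject to X = ∑_{r=1}^R a_r ∘ b_r ∘ c_r has the same optimal value as min (1/2)‖(Z − X) ⊙ Δ‖_F² + (3μ/2) ∑_{r=1}^R γ_r^{2/3} subject to X = ∑_r γ_r (u_r ∘ v_r ∘ w_r) with unit vectors u_r, v_r, w_r and γ_r ≥ 0. -/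
section TCAux

lemma myUnitVec_sq_sum (K : ℕ) (hK : 0 < K) :
    ∑ i, (if i = (⟨0, hK⟩ : Fin K) then (1:ℝ) else 0) ^ 2 = 1 := by
  rw [Finset.sum_congr rfl (fun i _ => by split <;> norm_num :
    ∀ i ∈ Finset.univ, (if i = (⟨0, hK⟩ : Fin K) then (1:ℝ) else 0) ^ 2
      = if i = (⟨0, hK⟩ : Fin K) then (1:ℝ) else 0)]
  simp

lemma myRpow_third_cube {x : ℝ} (hx : 0 ≤ x) :
    x ^ ((1:ℝ)/3) * x ^ ((1:ℝ)/3) * x ^ ((1:ℝ)/3) = x := by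
  have h : (x ^ ((1:ℝ)/3)) ^ (3:ℕ) = x := by
    rw [← Real.rpow_natCast (x ^ ((1:ℝ)/3)) 3, ← Real.rpow_mul hx]
    norm_num
  calc x ^ ((1:ℝ)/3) * x ^ ((1:ℝ)/3) * x ^ ((1:ℝ)/3) = (x ^ ((1:ℝ)/3)) ^ (3:ℕ) := by ring
    _ = x := h

lemma myRpow_third_sq {x : ℝ} (hx : 0 ≤ x) :
    (x ^ ((1:ℝ)/3)) ^ (2:ℕ) = x ^ ((2:ℝ)/3) := by
  rw [← Real.rpow_natCast (x ^ ((1:ℝ)/3)) 2, ← Real.rpow_mul hx]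
  norm_num

lemma myAmgm3 {a b c : ℝ} (ha : 0 ≤ a) (hb : 0 ≤ b) (hc : 0 ≤ c) :
    (a * b * c) ^ ((2:ℝ)/3) ≤ (a^2 + b^2 + c^2) / 3 := by
  have key := Real.geom_mean_le_arith_mean3_weighted
    (by norm_num : (0:ℝ) ≤ 1/3) (by norm_num : (0:ℝ) ≤ 1/3) (by norm_num : (0:ℝ) ≤ 1/3)
    (sq_nonneg a) (sq_nonneg b) (sq_nonneg c) (by norm_num)
  have heq : (a*b*c) ^ ((2:ℝ)/3)
      = (a^2) ^ ((1:ℝ)/3) * (b^2) ^ ((1:ℝ)/3) * (c^2) ^ ((1:ℝ)/3) := by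
    rw [← Real.mul_rpow (sq_nonneg a) (sq_nonneg b),
      ← Real.mul_rpow (mul_nonneg (sq_nonneg a) (sq_nonneg b)) (sq_nonneg c),
      show a^2*b^2*c^2 = (a*b*c)^2 by ring,
      ← Real.rpow_natCast (a*b*c) 2, ← Real.rpow_mul (by positivity)]
    norm_num
  rw [heq]
  linarith

lemma myNormalize {K R : ℕ} (hK : 0 < K) (A : Fin K → Fin R → ℝ) :
    ∃ (α : Fin R → ℝ) (u : Fin R → Fin K → ℝ),
      (∀ r, 0 ≤ α r) ∧ (∀ r, ∑ m, u r m ^ 2 = 1) ∧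
      (∀ r m, α r * u r m = A m r) ∧ (∀ r, α r ^ 2 = ∑ m, A m r ^ 2) := by
  classical
  set α : Fin R → ℝ := fun r => Real.sqrt (∑ m, A m r ^ 2) with hα
  have hαnn : ∀ r, 0 ≤ α r := fun r => Real.sqrt_nonneg _
  have hα2 : ∀ r, α r ^ 2 = ∑ m, A m r ^ 2 := fun r =>
    Real.sq_sqrt (Finset.sum_nonneg fun m _ => sq_nonneg _)
  have hA0 : ∀ r, α r = 0 → ∀ m, A m r = 0 := by
    intro r hr m
    have hs : ∑ m, A m r ^ 2 = 0 := by rw [← hα2 r, hr]; ring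
    have := (Finset.sum_eq_zero_iff_of_nonneg (fun m _ => sq_nonneg (A m r))).mp hs
      m (Finset.mem_univ m)
    exact pow_eq_zero_iff (n := 2) (by norm_num) |>.mp this
  refine ⟨α, fun r => if α r = 0 then (fun i => if i = (⟨0, hK⟩ : Fin K) then 1 else 0)
    else fun m => A m r / α r, hαnn, ?_, ?_, hα2⟩
  · intro r
    by_cases hr : α r = 0
    · simp only [if_pos hr]
      exact myUnitVec_sq_sum K hK
    · simp only [if_neg hr]
      have : ∀ m : Fin K, (A m r / α r) ^ 2 = A m r ^ 2 / α r ^ 2 := fun m => div_pow _ _ _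
      rw [Finset.sum_congr rfl fun m _ => this m, ← Finset.sum_div, ← hα2 r]
      field_simp
  · intro r m
    by_cases hr : α r = 0
    · simp only [if_pos hr, hr, hA0 r hr m, zero_mul]
    · simp only [if_neg hr]
      field_simp

end TCAux

/-- The PARAFAC tensor with factors `A, B, C`. -/
def parafacTensor {M N P R : ℕ} (A : Fin M → Fin R → ℝ) (B : Fin N → Fin R → ℝ)
    (C : Fin P → Fin R → ℝ) : Fin M → Fin N → Fin P → ℝ :=
  fun m n p => ∑ r, A m r * B n r * C p r

section TCSteps

lemma myStepA {M N P R : ℕ} (γ : Fin R → ℝ) (u : Fin R → Fin M → ℝ)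
    (w : Fin R → Fin N → ℝ) (t : Fin R → Fin P → ℝ)
    (hγ : ∀ r, 0 ≤ γ r) (hu : ∀ r, ∑ m, u r m ^ 2 = 1)
    (hw : ∀ r, ∑ n, w r n ^ 2 = 1) (ht : ∀ r, ∑ p, t r p ^ 2 = 1) :
    ∃ (A : Fin M → Fin R → ℝ) (B : Fin N → Fin R → ℝ) (C : Fin P → Fin R → ℝ),
      (∀ m n p, parafacTensor A B C m n p = ∑ r, γ r * (u r m * w r n * t r p)) ∧
      (∑ m, ∑ r, A m r ^ 2 = ∑ r, γ r ^ ((2:ℝ)/3)) ∧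
      (∑ n, ∑ r, B n r ^ 2 = ∑ r, γ r ^ ((2:ℝ)/3)) ∧
      (∑ p, ∑ r, C p r ^ 2 = ∑ r, γ r ^ ((2:ℝ)/3)) := by
  refine ⟨fun m r => γ r ^ ((1:ℝ)/3) * u r m, fun n r => γ r ^ ((1:ℝ)/3) * w r n,
    fun p r => γ r ^ ((1:ℝ)/3) * t r p, ?_, ?_, ?_, ?_⟩
  · intro m n p
    unfold parafacTensor
    refine Finset.sum_congr rfl fun r _ => ?_
    have h := myRpow_third_cube (hγ r)
    linear_combination (u r m * w r n * t r p) * h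
  · rw [Finset.sum_comm]
    refine Finset.sum_congr rfl fun r _ => ?_
    simp only [mul_pow]
    rw [← Finset.mul_sum, hu r, mul_one, myRpow_third_sq (hγ r)]
  · rw [Finset.sum_comm]
    refine Finset.sum_congr rfl fun r _ => ?_
    simp only [mul_pow]
    rw [← Finset.mul_sum, hw r, mul_one, myRpow_third_sq (hγ r)]
  · rw [Finset.sum_comm]
    refine Finset.sum_congr rfl fun r _ => ?_
    simp only [mul_pow]
    rw [← Finset.mul_sum, ht r, mul_one, myRpow_third_sq (hγ r)]

lemma myStepB {M N P R : ℕ} (hM : 0 < M) (hN : 0 < N) (hP : 0 < P)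
    (A : Fin M → Fin R → ℝ) (B : Fin N → Fin R → ℝ) (C : Fin P → Fin R → ℝ) :
    ∃ (γ : Fin R → ℝ) (u : Fin R → Fin M → ℝ) (w : Fin R → Fin N → ℝ)
      (t : Fin R → Fin P → ℝ),
      (∀ r, 0 ≤ γ r) ∧ (∀ r, ∑ m, u r m ^ 2 = 1) ∧ (∀ r, ∑ n, w r n ^ 2 = 1) ∧
      (∀ r, ∑ p, t r p ^ 2 = 1) ∧
      (∀ m n p, ∑ r, γ r * (u r m * w r n * t r p) = parafacTensor A B C m n p) ∧
      (∑ r, γ r ^ ((2:ℝ)/3))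
        ≤ ((∑ m, ∑ r, A m r ^ 2) + (∑ n, ∑ r, B n r ^ 2) + (∑ p, ∑ r, C p r ^ 2)) / 3 := by
  obtain ⟨α, u, hαnn, hu, hAu, hα2⟩ := myNormalize hM A
  obtain ⟨β, w, hβnn, hw, hBw, hβ2⟩ := myNormalize hN B
  obtain ⟨δ, t, hδnn, ht, hCt, hδ2⟩ := myNormalize hP C
  refine ⟨fun r => α r * β r * δ r, u, w, t,
    fun r => mul_nonneg (mul_nonneg (hαnn r) (hβnn r)) (hδnn r), hu, hw, ht, ?_, ?_⟩
  · intro m n p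
    unfold parafacTensor
    refine Finset.sum_congr rfl fun r _ => ?_
    rw [← hAu r m, ← hBw r n, ← hCt r p]
    ring
  · calc ∑ r, (α r * β r * δ r) ^ ((2:ℝ)/3)
        ≤ ∑ r, (α r ^ 2 + β r ^ 2 + δ r ^ 2) / 3 :=
          Finset.sum_le_sum fun r _ => myAmgm3 (hαnn r) (hβnn r) (hδnn r)
      _ = ((∑ r, α r ^ 2) + (∑ r, β r ^ 2) + (∑ r, δ r ^ 2)) / 3 := by
          rw [← Finset.sum_div, Finset.sum_add_distrib, Finset.sum_add_distrib]
      _ = ((∑ m, ∑ r, A m r ^ 2) + (∑ n, ∑ r, B n r ^ 2) + (∑ p, ∑ r, C p r ^ 2)) / 3 := by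
          rw [Finset.sum_congr rfl fun r _ => hα2 r, Finset.sum_congr rfl fun r _ => hβ2 r,
            Finset.sum_congr rfl fun r _ => hδ2 r, Finset.sum_comm,
            Finset.sum_comm (f := fun r n => B n r ^ 2),
            Finset.sum_comm (f := fun r p => C p r ^ 2)]

end TCSteps

/-- The Frobenius-norm regularized tensor completion problem has the same
optimal value as the `ℓ_{2/3}`-regularized problem over normalized rank-one
factors: `min (1/2)‖(Z−X)⊙Δ‖² + (μ/2)(‖A‖²+‖B‖²+‖C‖²)` over `X = ∑_r a_r∘b_r∘c_r`
equals `min (1/2)‖(Z−X)⊙Δ‖² + (3μ/2)∑_r γ_r^{2/3}` over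
`X = ∑_r γ_r (u_r∘v_r∘w_r)` with unit vectors `u_r, v_r, w_r` and `γ_r ≥ 0`. -/
theorem tensor_completion_equivalent_values (M N P R : ℕ) (μ : ℝ) (hμ : 0 < μ)
    (Z Δ : Fin M → Fin N → Fin P → ℝ) :
    sInf {v : ℝ | ∃ (A : Fin M → Fin R → ℝ) (B : Fin N → Fin R → ℝ)
        (C : Fin P → Fin R → ℝ),
        v = (1 / 2) * (∑ m, ∑ n, ∑ p,
              ((Z m n p - parafacTensor A B C m n p) * Δ m n p) ^ 2)
          + (μ / 2) * ((∑ m, ∑ r, A m r ^ 2) + (∑ n, ∑ r, B n r ^ 2)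
              + (∑ p, ∑ r, C p r ^ 2))} =
    sInf {v : ℝ | ∃ (γ : Fin R → ℝ) (u : Fin R → Fin M → ℝ)
        (w : Fin R → Fin N → ℝ) (t : Fin R → Fin P → ℝ),
        (∀ r, 0 ≤ γ r) ∧
        (∀ r, ∑ m, u r m ^ 2 = 1) ∧ (∀ r, ∑ n, w r n ^ 2 = 1) ∧
        (∀ r, ∑ p, t r p ^ 2 = 1) ∧
        v = (1 / 2) * (∑ m, ∑ n, ∑ p,
              ((Z m n p - ∑ r, γ r * (u r m * w r n * t r p)) * Δ m n p) ^ 2)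
          + (3 * μ / 2) * (∑ r, γ r ^ ((2 : ℝ) / 3))} := by
  set S1 : Set ℝ := {v : ℝ | ∃ (A : Fin M → Fin R → ℝ) (B : Fin N → Fin R → ℝ)
        (C : Fin P → Fin R → ℝ),
        v = (1 / 2) * (∑ m, ∑ n, ∑ p,
              ((Z m n p - parafacTensor A B C m n p) * Δ m n p) ^ 2)
          + (μ / 2) * ((∑ m, ∑ r, A m r ^ 2) + (∑ n, ∑ r, B n r ^ 2)
              + (∑ p, ∑ r, C p r ^ 2))} with hS1def
  set S2 : Set ℝ := {v : ℝ | ∃ (γ : Fin R → ℝ) (u : Fin R → Fin M → ℝ)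
        (w : Fin R → Fin N → ℝ) (t : Fin R → Fin P → ℝ),
        (∀ r, 0 ≤ γ r) ∧
        (∀ r, ∑ m, u r m ^ 2 = 1) ∧ (∀ r, ∑ n, w r n ^ 2 = 1) ∧
        (∀ r, ∑ p, t r p ^ 2 = 1) ∧
        v = (1 / 2) * (∑ m, ∑ n, ∑ p,
              ((Z m n p - ∑ r, γ r * (u r m * w r n * t r p)) * Δ m n p) ^ 2)
          + (3 * μ / 2) * (∑ r, γ r ^ ((2 : ℝ) / 3))} with hS2def
  have hS1nn : ∀ v ∈ S1, (0:ℝ) ≤ v := by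
    rintro v ⟨A, B, C, rfl⟩
    positivity
  have hS2nn : ∀ v ∈ S2, (0:ℝ) ≤ v := by
    rintro v ⟨γ, u, w, t, hγ, hu, hw, ht, rfl⟩
    have h2 : 0 ≤ ∑ r, γ r ^ ((2:ℝ)/3) :=
      Finset.sum_nonneg fun r _ => Real.rpow_nonneg (hγ r) _
    have h1 : (0:ℝ) ≤ (1 / 2) * (∑ m, ∑ n, ∑ p,
        ((Z m n p - ∑ r, γ r * (u r m * w r n * t r p)) * Δ m n p) ^ 2) := by positivity
    have h3 : (0:ℝ) ≤ 3 * μ / 2 := by linarith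
    exact add_nonneg h1 (mul_nonneg h3 h2)
  have hS1bdd : BddBelow S1 := ⟨0, hS1nn⟩
  have hS2bdd : BddBelow S2 := ⟨0, hS2nn⟩
  have hS1ne : S1.Nonempty := ⟨_, 0, 0, 0, rfl⟩
  have hsub : S2 ⊆ S1 := by
    rintro v ⟨γ, u, w, t, hγ, hu, hw, ht, rfl⟩
    obtain ⟨A, B, C, hX, hA, hB, hC⟩ := myStepA γ u w t hγ hu hw ht
    refine ⟨A, B, C, ?_⟩
    simp only [hX, hA, hB, hC]
    ring
  rcases Nat.eq_zero_or_pos M with hM | hM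
  · subst hM
    have h1 : sInf S1 = 0 := by
      have hmem : (0:ℝ) ∈ S1 := ⟨0, 0, 0, by simp [parafacTensor]⟩
      exact le_antisymm (csInf_le hS1bdd hmem) (le_csInf ⟨0, hmem⟩ hS1nn)
    rcases Nat.eq_zero_or_pos R with hR | hR
    · subst hR
      have hmem : (0:ℝ) ∈ S2 :=
        ⟨0, 0, 0, 0, fun r => r.elim0, fun r => r.elim0, fun r => r.elim0,
          fun r => r.elim0, by simp⟩
      rw [h1, le_antisymm (csInf_le hS2bdd hmem) (le_csInf ⟨0, hmem⟩ hS2nn)]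
    · have hempty : S2 = ∅ := by
        rw [Set.eq_empty_iff_forall_notMem]
        rintro v ⟨γ, u, w, t, hγ, hu, hw, ht, rfl⟩
        have := hu ⟨0, hR⟩
        simp at this
      rw [h1, hempty, Real.sInf_empty]
  rcases Nat.eq_zero_or_pos N with hN | hN
  · subst hN
    have h1 : sInf S1 = 0 := by
      have hmem : (0:ℝ) ∈ S1 := ⟨0, 0, 0, by simp [parafacTensor]⟩
      exact le_antisymm (csInf_le hS1bdd hmem) (le_csInf ⟨0, hmem⟩ hS1nn)
    rcases Nat.eq_zero_or_pos R with hR | hR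
    · subst hR
      have hmem : (0:ℝ) ∈ S2 :=
        ⟨0, 0, 0, 0, fun r => r.elim0, fun r => r.elim0, fun r => r.elim0,
          fun r => r.elim0, by simp⟩
      rw [h1, le_antisymm (csInf_le hS2bdd hmem) (le_csInf ⟨0, hmem⟩ hS2nn)]
    · have hempty : S2 = ∅ := by
        rw [Set.eq_empty_iff_forall_notMem]
        rintro v ⟨γ, u, w, t, hγ, hu, hw, ht, rfl⟩
        have := hw ⟨0, hR⟩
        simp at this
      rw [h1, hempty, Real.sInf_empty]
  rcases Nat.eq_zero_or_pos P with hP | hP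
  · subst hP
    have h1 : sInf S1 = 0 := by
      have hmem : (0:ℝ) ∈ S1 := ⟨0, 0, 0, by simp [parafacTensor]⟩
      exact le_antisymm (csInf_le hS1bdd hmem) (le_csInf ⟨0, hmem⟩ hS1nn)
    rcases Nat.eq_zero_or_pos R with hR | hR
    · subst hR
      have hmem : (0:ℝ) ∈ S2 :=
        ⟨0, 0, 0, 0, fun r => r.elim0, fun r => r.elim0, fun r => r.elim0,
          fun r => r.elim0, by simp⟩
      rw [h1, le_antisymm (csInf_le hS2bdd hmem) (le_csInf ⟨0, hmem⟩ hS2nn)]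
    · have hempty : S2 = ∅ := by
        rw [Set.eq_empty_iff_forall_notMem]
        rintro v ⟨γ, u, w, t, hγ, hu, hw, ht, rfl⟩
        have := ht ⟨0, hR⟩
        simp at this
      rw [h1, hempty, Real.sInf_empty]
  have hS2ne : S2.Nonempty := by
    obtain ⟨γ, u, w, t, h0, h1, h2, h3, _, _⟩ := myStepB hM hN hP
      (0 : Fin M → Fin R → ℝ) (0 : Fin N → Fin R → ℝ) (0 : Fin P → Fin R → ℝ)
    exact ⟨_, γ, u, w, t, h0, h1, h2, h3, rfl⟩
  apply le_antisymm
  · exact csInf_le_csInf hS1bdd hS2ne hsub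
  · refine le_csInf hS1ne ?_
    rintro v ⟨A, B, C, rfl⟩
    obtain ⟨γ, u, w, t, hγ, hu, hw, ht, hX, hreg⟩ := myStepB hM hN hP A B C
    refine csInf_le_of_le hS2bdd ⟨γ, u, w, t, hγ, hu, hw, ht, rfl⟩ ?_
    have hXeq : (∑ m, ∑ n, ∑ p,
          ((Z m n p - ∑ r, γ r * (u r m * w r n * t r p)) * Δ m n p) ^ 2)
        = ∑ m, ∑ n, ∑ p, ((Z m n p - parafacTensor A B C m n p) * Δ m n p) ^ 2 := by
      simp only [hX]
    rw [hXeq]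
    have hmul := mul_le_mul_of_nonneg_left hreg (by linarith : (0:ℝ) ≤ 3 * μ / 2)
    linarith
end
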